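/- arXiv:0909.0361 — 4 statements merged into one kernel-verified Lean document; each statement's English description precedes it below -/
import Mathlib

section
/- Let n ≥ 1 and let S be a skew-symmetric n×n complex matrix (Sᵀ = −S). Define the operator R_S on n×n complex matrices by R_S ξ = R_0 ξ + diag((S·δ(ξ))_1, …, (S·δ(ξ))_n), where δ(ξ) = (ξ_{11}, …, ξ_{nn}) is the vector of diagonal entries of ξ and (R_0 ξ)_{ij} = sign(j−i)·ξ_{ij}. Then: (a) R_S is skew-symmetric with respect to the trace form, i.e., Tr((R_S ξ)·η) = −Tr(ξ·(R_S η)) for all traceless n×n complex matrices ξ, η; and (b) R_S satisfies the modified classical Yang–Baxter equation: [R_S ξ, R_S η] − R_S([R_S ξ, η] + [ξ, R_S η]) = −[ξ, η] for all traceless n×n complex matrices ξ, η. -/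
/-- The standard R-matrix `R₀` on `n × n` complex matrices:
`(R₀ ξ)_{ij} = sign(j - i) · ξ_{ij}`. -/
def R0 {n : ℕ} (ξ : Matrix (Fin n) (Fin n) ℂ) : Matrix (Fin n) (Fin n) ℂ :=
  Matrix.of fun i j => ((Int.sign ((j : ℤ) - (i : ℤ)) : ℤ) : ℂ) * ξ i j

/-- The R-matrix `R_S = R₀ + S π₀`, sending `ξ` to `R₀ ξ` plus the diagonal matrix
whose `i`-th diagonal entry is `(S · δ(ξ))_i = Σ_j S_{ij} ξ_{jj}`. -/
noncomputable def RS {n : ℕ} (S : Matrix (Fin n) (Fin n) ℂ)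
    (ξ : Matrix (Fin n) (Fin n) ℂ) : Matrix (Fin n) (Fin n) ℂ :=
  R0 ξ + Matrix.diagonal (fun i => ∑ j, S i j * ξ j j)

lemma sign_key (x y : ℤ) (h : ¬(x = 0 ∧ y = 0)) :
    Int.sign x * Int.sign y - Int.sign (x + y) * (Int.sign x + Int.sign y) + 1 = 0 := by
  rcases lt_trichotomy x 0 with hx | hx | hx <;> rcases lt_trichotomy y 0 with hy | hy | hy
  · rw [Int.sign_eq_neg_one_iff_neg.2 hx, Int.sign_eq_neg_one_iff_neg.2 hy,
      Int.sign_eq_neg_one_iff_neg.2 (show x + y < 0 by omega)]; ring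
  · rw [Int.sign_eq_neg_one_iff_neg.2 hx, hy, add_zero, Int.sign_zero,
      Int.sign_eq_neg_one_iff_neg.2 hx]; ring
  · rw [Int.sign_eq_neg_one_iff_neg.2 hx, Int.sign_eq_one_iff_pos.2 hy]; ring
  · rw [hx, zero_add, Int.sign_zero, Int.sign_eq_neg_one_iff_neg.2 hy]; ring
  · exact absurd ⟨hx, hy⟩ h
  · rw [hx, zero_add, Int.sign_zero, Int.sign_eq_one_iff_pos.2 hy]; ring
  · rw [Int.sign_eq_one_iff_pos.2 hx, Int.sign_eq_neg_one_iff_neg.2 hy]; ring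
  · rw [Int.sign_eq_one_iff_pos.2 hx, hy, add_zero, Int.sign_zero,
      Int.sign_eq_one_iff_pos.2 hx]; ring
  · rw [Int.sign_eq_one_iff_pos.2 hx, Int.sign_eq_one_iff_pos.2 hy,
      Int.sign_eq_one_iff_pos.2 (show 0 < x + y by omega)]; ring

lemma R0_add {n : ℕ} (a b : Matrix (Fin n) (Fin n) ℂ) : R0 (a + b) = R0 a + R0 b := by
  ext i j; simp [R0, Matrix.add_apply, mul_add]

lemma R0_diagL {n : ℕ} (d : Fin n → ℂ) (η : Matrix (Fin n) (Fin n) ℂ) :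
    R0 (Matrix.diagonal d * η - η * Matrix.diagonal d)
      = Matrix.diagonal d * R0 η - R0 η * Matrix.diagonal d := by
  ext i j
  simp [R0, Matrix.sub_apply, Matrix.diagonal_mul, Matrix.mul_diagonal]
  ring

lemma R0_diagR {n : ℕ} (ξ : Matrix (Fin n) (Fin n) ℂ) (d : Fin n → ℂ) :
    R0 (ξ * Matrix.diagonal d - Matrix.diagonal d * ξ)
      = R0 ξ * Matrix.diagonal d - Matrix.diagonal d * R0 ξ := by
  ext i j
  simp [R0, Matrix.sub_apply, Matrix.diagonal_mul, Matrix.mul_diagonal]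
  ring

lemma diag_R0_comm {n : ℕ} (ξ η : Matrix (Fin n) (Fin n) ℂ) (m : Fin n) :
    ((R0 ξ * η - η * R0 ξ) + (ξ * R0 η - R0 η * ξ)) m m = 0 := by
  simp only [Matrix.add_apply, Matrix.sub_apply, Matrix.mul_apply, R0, Matrix.of_apply]
  simp only [← Finset.sum_sub_distrib, ← Finset.sum_add_distrib]
  apply Finset.sum_eq_zero
  intro k _
  have h : ((m : ℤ) - k) = -((k : ℤ) - m) := by ring
  rw [h, Int.sign_neg]
  push_cast
  ring

lemma R0_mcybe {n : ℕ} (ξ η : Matrix (Fin n) (Fin n) ℂ) :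
    R0 ξ * R0 η - R0 η * R0 ξ
      - R0 ((R0 ξ * η - η * R0 ξ) + (ξ * R0 η - R0 η * ξ)) = -(ξ * η - η * ξ) := by
  ext i j
  simp only [Matrix.sub_apply, Matrix.add_apply, Matrix.neg_apply, Matrix.mul_apply, R0,
    Matrix.of_apply, Finset.mul_sum]
  rw [← sub_eq_zero]
  simp only [Finset.mul_sum, ← Finset.sum_sub_distrib, ← Finset.sum_add_distrib,
    ← Finset.sum_neg_distrib]
  apply Finset.sum_eq_zero
  intro k _
  by_cases hk : ((k : ℤ) - (i : ℤ) = 0 ∧ (j : ℤ) - (k : ℤ) = 0)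
  · obtain ⟨hk1, hk2⟩ := hk
    have hki : k = i := Fin.ext (by omega)
    have hji : j = i := Fin.ext (by omega)
    subst hki; subst hji
    simp [Int.sign_zero]
    ring
  · have h := sign_key ((k : ℤ) - i) ((j : ℤ) - k) hk
    have h2 : ((k : ℤ) - i) + ((j : ℤ) - k) = (j : ℤ) - i := by ring
    rw [h2] at h
    have hc : ((Int.sign ((k : ℤ) - i) * Int.sign ((j : ℤ) - k)
        - Int.sign ((j : ℤ) - i) * (Int.sign ((k : ℤ) - i) + Int.sign ((j : ℤ) - k)) + 1 : ℤ) : ℂ)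
        = 0 := by rw [h]; norm_num
    push_cast at hc
    linear_combination (ξ i k * η k j - η i k * ξ k j) * hc

lemma mcybe_aux {n : ℕ} (S ξ η : Matrix (Fin n) (Fin n) ℂ) (dξ dη : Fin n → ℂ) :
    ((R0 ξ + Matrix.diagonal dξ) * (R0 η + Matrix.diagonal dη)
        - (R0 η + Matrix.diagonal dη) * (R0 ξ + Matrix.diagonal dξ))
      - (R0 (((R0 ξ + Matrix.diagonal dξ) * η - η * (R0 ξ + Matrix.diagonal dξ))
            + (ξ * (R0 η + Matrix.diagonal dη) - (R0 η + Matrix.diagonal dη) * ξ))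
          + Matrix.diagonal (fun i => ∑ j, S i j *
              ((((R0 ξ + Matrix.diagonal dξ) * η - η * (R0 ξ + Matrix.diagonal dξ))
                + (ξ * (R0 η + Matrix.diagonal dη) - (R0 η + Matrix.diagonal dη) * ξ)) j j)))
      = -(ξ * η - η * ξ) := by
  set Dξ := Matrix.diagonal dξ with hDξ
  set Dη := Matrix.diagonal dη with hDη
  set C := ((R0 ξ + Dξ) * η - η * (R0 ξ + Dξ)) + (ξ * (R0 η + Dη) - (R0 η + Dη) * ξ) with hCdef
  have e : C = ((R0 ξ * η - η * R0 ξ) + (ξ * R0 η - R0 η * ξ))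
      + ((Dξ * η - η * Dξ) + (ξ * Dη - Dη * ξ)) := by rw [hCdef]; noncomm_ring
  have hCd : ∀ m, C m m = 0 := by
    intro m
    rw [e, Matrix.add_apply, diag_R0_comm, zero_add, hDξ, hDη]
    simp [Matrix.add_apply, Matrix.sub_apply, Matrix.diagonal_mul, Matrix.mul_diagonal, mul_comm]
  have hdiag0 : Matrix.diagonal (fun i => ∑ j, S i j * C j j) = 0 := by simp [hCd]
  have hRC : R0 C = (R0 (R0 ξ * η - η * R0 ξ) + R0 (ξ * R0 η - R0 η * ξ))
      + ((Dξ * R0 η - R0 η * Dξ) + (R0 ξ * Dη - Dη * R0 ξ)) := by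
    rw [e, hDξ, hDη, R0_add, R0_add, R0_add, R0_diagL, R0_diagR]
  have hcomm : Dξ * Dη = Dη * Dξ := by
    rw [hDξ, hDη, Matrix.diagonal_mul_diagonal, Matrix.diagonal_mul_diagonal]
    exact congrArg Matrix.diagonal (funext fun i => mul_comm _ _)
  have hmain := R0_mcybe ξ η
  rw [R0_add] at hmain
  rw [hdiag0, add_zero, hRC, ← hmain]
  simp only [mul_add, add_mul]
  rw [hcomm]
  abel

/-- For a skew-symmetric matrix `S`, the operator `R_S = R₀ + Sπ₀` is
(a) skew-symmetric with respect to the trace form on traceless matrices, and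
(b) satisfies the modified classical Yang–Baxter equation
`[R_Sξ, R_Sη] − R_S([R_Sξ, η] + [ξ, R_Sη]) = −[ξ, η]` on traceless matrices. -/
theorem RS_skew_and_MCYBE (n : ℕ) (hn : 1 ≤ n)
    (S : Matrix (Fin n) (Fin n) ℂ) (hS : Matrix.transpose S = -S) :
    (∀ ξ η : Matrix (Fin n) (Fin n) ℂ, Matrix.trace ξ = 0 → Matrix.trace η = 0 →
        Matrix.trace (RS S ξ * η) = -Matrix.trace (ξ * RS S η))
    ∧
    (∀ ξ η : Matrix (Fin n) (Fin n) ℂ, Matrix.trace ξ = 0 → Matrix.trace η = 0 →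
        (RS S ξ * RS S η - RS S η * RS S ξ)
          - RS S ((RS S ξ * η - η * RS S ξ) + (ξ * RS S η - RS S η * ξ))
          = -(ξ * η - η * ξ)) := by
  have hS' : ∀ i j, S j i = -S i j := by
    intro i j
    have := congrFun (congrFun hS i) j
    simpa [Matrix.transpose_apply, Matrix.neg_apply] using this
  constructor
  · intro ξ η _ _
    rw [RS, RS, add_mul, mul_add, Matrix.trace_add, Matrix.trace_add]
    have h1 : Matrix.trace (R0 ξ * η) = -Matrix.trace (ξ * R0 η) := by
      simp only [Matrix.trace, Matrix.diag_apply, Matrix.mul_apply, R0, Matrix.of_apply]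
      rw [← Finset.sum_neg_distrib]
      refine Finset.sum_congr rfl fun i _ => ?_
      rw [← Finset.sum_neg_distrib]
      refine Finset.sum_congr rfl fun k _ => ?_
      have h : ((i : ℤ) - k) = -((k : ℤ) - i) := by ring
      rw [h, Int.sign_neg]
      push_cast
      ring
    have h2 : Matrix.trace (Matrix.diagonal (fun i => ∑ j, S i j * ξ j j) * η)
        = -Matrix.trace (ξ * Matrix.diagonal (fun i => ∑ j, S i j * η j j)) := by
      simp only [Matrix.trace, Matrix.diag_apply, Matrix.diagonal_mul, Matrix.mul_diagonal,
        Finset.sum_mul, Finset.mul_sum]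
      rw [Finset.sum_comm, ← Finset.sum_neg_distrib]
      refine Finset.sum_congr rfl fun i _ => ?_
      rw [← Finset.sum_neg_distrib]
      refine Finset.sum_congr rfl fun j _ => ?_
      rw [hS' i j]
      ring
    rw [h1, h2]
    ring
  · intro ξ η _ _
    simp only [RS]
    exact mcybe_aux S ξ η _ _
end

section
/- Let n ≥ 1, let X be an n×n complex matrix, and let i, j, i', j' ∈ {1,…,n}. Let E_{ab} denote the n×n matrix unit with 1 in position (a,b) and 0 elsewhere, and let R_0 be the standard R-matrix (R_0 ξ)_{ij} = sign(j−i)·ξ_{ij}. Then ½·Tr(R_0(E_{ji}·X)·(E_{j'i'}·X)) − ½·Tr(R_0(X·E_{ji})·(X·E_{j'i'})) = ½·(sign(i'−i) + sign(j'−j))·X_{ij'}·X_{i'j}. (This is the Sklyanin bracket of the coordinate functions x_{ij} and x_{i'j'} associated with R_0, evaluated at X.) -/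
/-- The matrix unit `E_{ab}` with a `1` in position `(a,b)` and `0` elsewhere. -/
def E {n : ℕ} (a b : Fin n) : Matrix (Fin n) (Fin n) ℂ :=
  Matrix.single a b 1

open Matrix

section

variable {n : ℕ}

@[simp]
lemma R0_apply (ξ : Matrix (Fin n) (Fin n) ℂ) (a b : Fin n) :
    R0 ξ a b = (Int.sign ((b : ℤ) - a) : ℂ) * ξ a b := rfl

lemma trace_mul_E_mul (M X : Matrix (Fin n) (Fin n) ℂ) (a b : Fin n) :
    trace (M * (E a b * X)) = (X * M) b a := by
  rw [trace_mul_comm, Matrix.mul_assoc, E, trace_single_mul, one_smul]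

lemma trace_mul_mul_E (M X : Matrix (Fin n) (Fin n) ℂ) (a b : Fin n) :
    trace (M * (X * E a b)) = (M * X) b a := by
  rw [← Matrix.mul_assoc, E, trace_mul_single, MulOpposite.op_one, one_smul]

lemma E_mul_apply (X : Matrix (Fin n) (Fin n) ℂ) (a b c d : Fin n) :
    (E a b * X) c d = if c = a then X b d else 0 := by
  split_ifs with h
  · rw [h, E, single_mul_apply_same, one_mul]
  · exact single_mul_apply_of_ne _ _ _ _ _ h _

lemma mul_E_apply (X : Matrix (Fin n) (Fin n) ℂ) (a b c d : Fin n) :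
    (X * E a b) c d = if d = b then X c a else 0 := by
  split_ifs with h
  · rw [h, E, mul_single_apply_same, mul_one]
  · exact mul_single_apply_of_ne _ _ _ _ _ h _

lemma trace_R0_E_mul_mul_E_mul (X : Matrix (Fin n) (Fin n) ℂ) (i j i' j' : Fin n) :
    trace (R0 (E j i * X) * (E j' i' * X)) = (Int.sign ((j' : ℤ) - j) : ℂ) * X i j' * X i' j := by
  rw [trace_mul_E_mul, mul_apply]
  simp only [R0_apply, E_mul_apply, mul_ite, mul_zero, Finset.sum_ite_eq', Finset.mem_univ,
    ↓reduceIte]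
  ring

lemma trace_R0_mul_E_mul_mul_E (X : Matrix (Fin n) (Fin n) ℂ) (i j i' j' : Fin n) :
    trace (R0 (X * E j i) * (X * E j' i')) = (Int.sign ((i : ℤ) - i') : ℂ) * X i j' * X i' j := by
  rw [trace_mul_mul_E, mul_apply]
  simp only [R0_apply, mul_E_apply, mul_ite, mul_zero, ite_mul, zero_mul, Finset.sum_ite_eq',
    Finset.mem_univ, ↓reduceIte]
  ring

end

theorem sklyanin_R0_on_matrix_entries_general (n : ℕ)
    (X : Matrix (Fin n) (Fin n) ℂ) (i j i' j' : Fin n) :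
    (1 / 2 : ℂ) * Matrix.trace (R0 (E j i * X) * (E j' i' * X))
      - (1 / 2 : ℂ) * Matrix.trace (R0 (X * E j i) * (X * E j' i'))
      = (1 / 2 : ℂ)
          * ((Int.sign ((i' : ℤ) - (i : ℤ)) + Int.sign ((j' : ℤ) - (j : ℤ)) : ℤ) : ℂ)
          * X i j' * X i' j := by
  rw [trace_R0_E_mul_mul_E_mul, trace_R0_mul_E_mul_mul_E, ← neg_sub (i' : ℤ), Int.sign_neg]
  push_cast
  ring

/-- The Sklyanin bracket associated with the standard R-matrix `R₀`, evaluated on the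
coordinate functions `x_{ij}`, `x_{i'j'}` at the matrix `X`:
`½ Tr(R₀(E_{ji}X)·(E_{j'i'}X)) − ½ Tr(R₀(X E_{ji})·(X E_{j'i'}))
  = ½ (sign(i'−i) + sign(j'−j)) X_{ij'} X_{i'j}`. -/
theorem sklyanin_R0_on_matrix_entries (n : ℕ) (hn : 1 ≤ n)
    (X : Matrix (Fin n) (Fin n) ℂ) (i j i' j' : Fin n) :
    (1 / 2 : ℂ) * Matrix.trace (R0 (E j i * X) * (E j' i' * X))
      - (1 / 2 : ℂ) * Matrix.trace (R0 (X * E j i) * (X * E j' i'))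
      = (1 / 2 : ℂ)
          * ((Int.sign ((i' : ℤ) - (i : ℤ)) + Int.sign ((j' : ℤ) - (j : ℤ)) : ℤ) : ℂ)
          * X i j' * X i' j :=
  sklyanin_R0_on_matrix_entries_general n X i j i' j'
end

section
/- Let n ≥ 1, let S be a skew-symmetric n×n complex matrix, let X be an n×n complex matrix, and let i, j, i', j' ∈ {1,…,n}. Let E_{ab} denote the n×n matrix unit and let R_S ξ = R_0 ξ + diag((S·δ(ξ))_1,…,(S·δ(ξ))_n), where δ(ξ) is the vector of diagonal entries of ξ and (R_0 ξ)_{ij} = sign(j−i)·ξ_{ij}. Then ½·Tr(R_S(E_{ji}·X)·(E_{j'i'}·X)) − ½·Tr(R_S(X·E_{ji})·(X·E_{j'i'})) = ½·(sign(i'−i) + sign(j'−j))·X_{ij'}·X_{i'j} + ½·(S_{ii'} − S_{jj'})·X_{ij}·X_{i'j'}. (This is the Sklyanin bracket of the coordinate functions x_{ij} and x_{i'j'} associated with R_S, evaluated at X.) -/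
/-!
Since `R_S = R₀ + S π₀` is linear, `Tr(R_S ξ · η)` splits into the sum
`Σ_{p,q} sign(q - p) ξ_{pq} η_{qp}` and the diagonal part `Σ_p (S δ(ξ))_p η_{pp}`.
For `ξ, η` of the form `E_{ab} X` (a single nonzero row) or `X E_{ab}` (a single nonzero
column) both sums collapse to one term. In the difference of the two traces the `R₀`-terms
combine to `sign(i' - i) + sign(j' - j)` because `sign` is odd, and the `S`-terms to
`S_{ii'} - S_{jj'}` because `S` is skew-symmetric.
-/

open Matrix

section single

variable {l m n α : Type*} [Fintype m] [DecidableEq l] [DecidableEq m] [NonAssocSemiring α]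

theorem Matrix.single_one_mul_apply (a : l) (b : m) (X : Matrix m n α) (p : l) (q : n) :
    (single a b (1 : α) * X) p q = if p = a then X b q else 0 := by
  split_ifs with h
  · subst h; simp
  · exact single_mul_apply_of_ne _ _ _ _ _ h X

omit [DecidableEq l] in
theorem Matrix.mul_single_one_apply [DecidableEq n] (a : m) (b : n) (X : Matrix l m α)
    (p : l) (q : n) : (X * single a b (1 : α)) p q = if q = b then X p a else 0 := by
  split_ifs with h
  · subst h; simp
  · exact mul_single_apply_of_ne _ _ _ _ _ h X

end single

section RS

variable {n : ℕ}

theorem trace_RS_mul (S ξ η : Matrix (Fin n) (Fin n) ℂ) :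
    trace (RS S ξ * η) =
      ∑ p : Fin n, ∑ q : Fin n, ((Int.sign ((q : ℤ) - (p : ℤ)) : ℤ) : ℂ) * ξ p q * η q p
        + ∑ p, (∑ k, S p k * ξ k k) * η p p := by
  rw [RS, add_mul, trace_add]
  simp only [trace, diag_apply, diagonal_mul]
  simp only [mul_apply, R0, of_apply]

theorem trace_RS_single_mul_mul_single_mul (S X : Matrix (Fin n) (Fin n) ℂ) (a b c d : Fin n) :
    trace (RS S (E a b * X) * (E c d * X)) =
      ((Int.sign ((c : ℤ) - (a : ℤ)) : ℤ) : ℂ) * X b c * X d a + S c a * X b a * X d c := by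
  simp [trace_RS_mul, E, single_one_mul_apply, ite_mul, mul_ite, Finset.sum_ite_eq']

theorem trace_RS_mul_single_mul_mul_single (S X : Matrix (Fin n) (Fin n) ℂ) (a b c d : Fin n) :
    trace (RS S (X * E a b) * (X * E c d)) =
      ((Int.sign ((b : ℤ) - (d : ℤ)) : ℤ) : ℂ) * X d a * X b c + S d b * X b a * X d c := by
  simp [trace_RS_mul, E, mul_single_one_apply, ite_mul, mul_ite, Finset.sum_ite_eq']

end RS

theorem sklyanin_RS_on_matrix_entries_general (n : ℕ)
    (S : Matrix (Fin n) (Fin n) ℂ) (hS : Matrix.transpose S = -S)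
    (X : Matrix (Fin n) (Fin n) ℂ) (i j i' j' : Fin n) :
    (1 / 2 : ℂ) * Matrix.trace (RS S (E j i * X) * (E j' i' * X))
      - (1 / 2 : ℂ) * Matrix.trace (RS S (X * E j i) * (X * E j' i'))
      = (1 / 2 : ℂ)
          * ((Int.sign ((i' : ℤ) - (i : ℤ)) + Int.sign ((j' : ℤ) - (j : ℤ)) : ℤ) : ℂ)
          * X i j' * X i' j
        + (1 / 2 : ℂ) * (S i i' - S j j') * X i j * X i' j' := by
  have hskew (a b : Fin n) : S b a = -S a b := by
    simpa using congrFun (congrFun hS a) b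
  rw [trace_RS_single_mul_mul_single_mul, trace_RS_mul_single_mul_mul_single, hskew i i',
    hskew j j', ← neg_sub (i' : ℤ), Int.sign_neg]
  push_cast
  ring

/-- The Sklyanin bracket associated with `R_S`, evaluated on the coordinate functions
`x_{ij}`, `x_{i'j'}` at the matrix `X`:
`½ Tr(R_S(E_{ji}X)·(E_{j'i'}X)) − ½ Tr(R_S(X E_{ji})·(X E_{j'i'}))
  = ½ (sign(i'−i) + sign(j'−j)) X_{ij'} X_{i'j} + ½ (S_{ii'} − S_{jj'}) X_{ij} X_{i'j'}`. -/
theorem sklyanin_RS_on_matrix_entries (n : ℕ) (hn : 1 ≤ n)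
    (S : Matrix (Fin n) (Fin n) ℂ) (hS : Matrix.transpose S = -S)
    (X : Matrix (Fin n) (Fin n) ℂ) (i j i' j' : Fin n) :
    (1 / 2 : ℂ) * Matrix.trace (RS S (E j i * X) * (E j' i' * X))
      - (1 / 2 : ℂ) * Matrix.trace (RS S (X * E j i) * (X * E j' i'))
      = (1 / 2 : ℂ)
          * ((Int.sign ((i' : ℤ) - (i : ℤ)) + Int.sign ((j' : ℤ) - (j : ℤ)) : ℤ) : ℂ)
          * X i j' * X i' j
        + (1 / 2 : ℂ) * (S i i' - S j j') * X i j * X i' j' :=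
  sklyanin_RS_on_matrix_entries_general n S hS X i j i' j'
end

section
/- Let n ≥ 1 and let S be a skew-symmetric n×n complex matrix. Consider the polynomial ring ℂ[u_1,…,u_n, v_1,…,v_n, x_{ij} (1 ≤ i,j ≤ n)] with the bracket defined as the biderivation determined on generators by: {u_i, u_j} = ½·S_{ij}·u_i·u_j, {v_i, v_j} = −½·S_{ij}·v_i·v_j, {x_{ij}, x_{i'j'}} = ½·(sign(i'−i) + sign(j'−j))·x_{ij'}·x_{i'j}, and {u_i, v_j} = {u_i, x_{ab}} = {v_i, x_{ab}} = 0 for all indices. Define x̂_{ij} = u_i·x_{ij}·v_j (the entries of D_1·X·D_2 with D_1 = diag(u), D_2 = diag(v)). Then for all i, j, i', j' ∈ {1,…,n}: {x̂_{ij}, x̂_{i'j'}} = ½·(sign(i'−i) + sign(j'−j))·x̂_{ij'}·x̂_{i'j} + ½·(S_{ii'} − S_{jj'})·x̂_{ij}·x̂_{i'j'}. (Equivalently: the map (D_1, X, D_2) ↦ D_1·X·D_2 is Poisson from H^{½S} × SL_n^{0} × H^{−½S} to SL_n^{S}.) -/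
open MvPolynomial

/-- Variables of the polynomial ring `ℂ[u_1,…,u_n, v_1,…,v_n, x_{ij}]`:
`Sum.inl i` is `u_i`, `Sum.inr (Sum.inl j)` is `v_j`, and
`Sum.inr (Sum.inr (i,j))` is `x_{ij}`. -/
abbrev Vars (n : ℕ) := Fin n ⊕ (Fin n ⊕ (Fin n × Fin n))

/-- The bivector coefficients of the product Poisson structure on
`H^{½S} × SL_n^{0} × H^{−½S}`: `{u_i,u_j} = ½ S_{ij} u_i u_j`,
`{v_i,v_j} = −½ S_{ij} v_i v_j`,
`{x_{ij},x_{i'j'}} = ½(sign(i'−i)+sign(j'−j)) x_{ij'} x_{i'j}`,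
and all cross brackets vanish. -/
noncomputable def bivec {n : ℕ} (S : Matrix (Fin n) (Fin n) ℂ) :
    Vars n → Vars n → MvPolynomial (Vars n) ℂ
  | Sum.inl i, Sum.inl j =>
      C ((1 / 2 : ℂ) * S i j) * X (Sum.inl i) * X (Sum.inl j)
  | Sum.inr (Sum.inl i), Sum.inr (Sum.inl j) =>
      C (-(1 / 2 : ℂ) * S i j) * X (Sum.inr (Sum.inl i)) * X (Sum.inr (Sum.inl j))
  | Sum.inr (Sum.inr p), Sum.inr (Sum.inr q) =>
      C ((1 / 2 : ℂ) *
          ((Int.sign ((q.1 : ℤ) - (p.1 : ℤ)) + Int.sign ((q.2 : ℤ) - (p.2 : ℤ)) : ℤ) : ℂ))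
        * X (Sum.inr (Sum.inr (p.1, q.2))) * X (Sum.inr (Sum.inr (q.1, p.2)))
  | _, _ => 0

/-- The product Poisson bracket on `ℂ[u, v, x]`, extended from the generators as a
biderivation in each argument. -/
noncomputable def prodBracket {n : ℕ} (S : Matrix (Fin n) (Fin n) ℂ)
    (f g : MvPolynomial (Vars n) ℂ) : MvPolynomial (Vars n) ℂ :=
  ∑ a : Vars n, ∑ b : Vars n, bivec S a b * pderiv a f * pderiv b g

/-- `x̂_{ij} = u_i · x_{ij} · v_j`, the entries of `D₁ X D₂` with
`D₁ = diag(u)`, `D₂ = diag(v)`. -/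
noncomputable def xhat {n : ℕ} (i j : Fin n) : MvPolynomial (Vars n) ℂ :=
  X (Sum.inl i) * X (Sum.inr (Sum.inr (i, j))) * X (Sum.inr (Sum.inl j))

lemma pderiv_xhat {n : ℕ} (i j : Fin n) (a : Vars n) :
    pderiv a (xhat i j) =
      (if a = Sum.inl i then
        X (Sum.inr (Sum.inr (i, j))) * X (Sum.inr (Sum.inl j)) else 0)
      + (if a = Sum.inr (Sum.inr (i, j)) then
        X (Sum.inl i) * X (Sum.inr (Sum.inl j)) else 0)
      + (if a = Sum.inr (Sum.inl j) then
        X (Sum.inl i) * X (Sum.inr (Sum.inr (i, j))) else 0) := by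
  rcases a with a | a | a
  · rcases eq_or_ne a i with h | h
    · subst h; simp [xhat, pderiv_mul, mul_comm]
    · simp [xhat, pderiv_mul, h, h.symm]
  · rcases eq_or_ne a j with h | h
    · subst h; simp [xhat, pderiv_mul, mul_comm]
    · simp [xhat, pderiv_mul, h, h.symm]
  · rcases eq_or_ne a (i, j) with h | h
    · subst h; simp [xhat, pderiv_mul, mul_comm]
    · simp [xhat, pderiv_mul, h, h.symm]

/-- The map `(D₁, X, D₂) ↦ D₁ X D₂` is Poisson from
`H^{½S} × SL_n^{0} × H^{−½S}` to `SL_n^{S}`: the entries `x̂_{ij} = u_i x_{ij} v_j`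
satisfy the Sklyanin relations associated with `R_S`. -/
theorem prodBracket_xhat (n : ℕ) (hn : 1 ≤ n)
    (S : Matrix (Fin n) (Fin n) ℂ) (hS : Matrix.transpose S = -S)
    (i j i' j' : Fin n) :
    prodBracket S (xhat i j) (xhat i' j')
      = C ((1 / 2 : ℂ) *
            ((Int.sign ((i' : ℤ) - (i : ℤ)) + Int.sign ((j' : ℤ) - (j : ℤ)) : ℤ) : ℂ))
          * xhat i j' * xhat i' j
        + C ((1 / 2 : ℂ) * (S i i' - S j j')) * xhat i j * xhat i' j' := by
  simp only [prodBracket, pderiv_xhat]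
  simp only [mul_add, add_mul, mul_ite, ite_mul, mul_zero, zero_mul,
    Finset.sum_add_distrib, Finset.sum_ite_eq', Finset.mem_univ, if_true]
  simp only [bivec, xhat, map_mul, map_sub, map_neg]
  ring
end
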